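/- Let F be a field with a valuation v, and let K ⊆ K' and K ⊆ L be subfields of F. Assume that the extension L/K is vs-defectless, that Γ(L) ∩ Γ(K') = Γ(K), and that the residue field k(L) is linearly disjoint from k(K') over k(K) inside the residue field of F. Let LK' denote the subfield of F generated by L ∪ K'. Then the extension LK'/K' is vs-defectless. -/

import Mathlib

open scoped Pointwise

/-- Linear independence of a finite family over a subset `E` of a commutative ring: no
nontrivial linear combination with coefficients in `E` vanishes. -/
def LinIndepOver {R : Type*} [CommRing R] (E : Set R) {n : ℕ} (b : Fin n → R) : Prop :=
  ∀ c : Fin n → R, (∀ i, c i ∈ E) → (∑ i, c i * b i) = 0 → ∀ i, c i = 0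

variable {F Γ₀ : Type*} [Field F] [LinearOrderedCommGroupWithZero Γ₀]

/-- A finite family `b` of elements of `F` is `E`-valuation independent:
`v(∑ cᵢ bᵢ) = minᵢ v(cᵢ bᵢ)` for all coefficients `cᵢ ∈ E`.  (In Mathlib's multiplicative
convention for valuations, the additive `min` becomes the multiplicative `sup`, and the additive
`∞` becomes `0`.) -/
def ValIndep (v : Valuation F Γ₀) (E : Set F) {n : ℕ} (b : Fin n → F) : Prop :=
  letI : OrderBot Γ₀ := { bot := 0, bot_le := fun _ => zero_le' }
  ∀ c : Fin n → F, (∀ i, c i ∈ E) →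
    v (∑ i, c i * b i) = Finset.univ.sup fun i => v (c i * b i)

/-- The `E`-linear span (inside `F`) of a subset `s ⊆ F`, for `E ⊆ F`. -/
def SpanOver (E s : Set F) : Set F :=
  {y | ∃ (n : ℕ) (c t : Fin n → F),
    (∀ i, c i ∈ E) ∧ (∀ i, t i ∈ s) ∧ y = ∑ i, c i * t i}

/-- The extension `L/E` is vs-defectless: every finite-dimensional `E`-vector subspace of `L`
admits an `E`-basis which is `E`-valuation independent. -/
def VsDefectless (v : Valuation F Γ₀) (E L : Set F) : Prop :=
  ∀ (n : ℕ) (x : Fin n → F), (∀ i, x i ∈ L) →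
    ∃ (m : ℕ) (b : Fin m → F),
      ValIndep v E b ∧ LinIndepOver E b ∧
        SpanOver E (Set.range b) = SpanOver E (Set.range x)

/-- The value group `Γ(E) = v(E∖{0})` of a subset `E ⊆ F`, as a subset of `Γ₀`. -/
def ValueGroupSet (v : Valuation F Γ₀) (E : Set F) : Set Γ₀ :=
  v '' (E \ {0})

/-- The residue field `k_F = O_F/m_F` of the valued field `(F, v)`. -/
abbrev ResField (v : Valuation F Γ₀) : Type _ :=
  IsLocalRing.ResidueField v.valuationSubring

/-- The image `k(E) = res(O_E)` of a subset `E ⊆ F` in the residue field of `(F, v)`. -/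
def ResidueSet (v : Valuation F Γ₀) (E : Set F) : Set (ResField v) :=
  {y | ∃ x : v.valuationSubring, (x : F) ∈ E ∧ IsLocalRing.residue _ x = y}

/-!
Clearing denominators turns a finite family in `LK'` into one lying, up to a common factor, in the
`K'`-span of finitely many elements of `L`. These span a `K`-subspace of `L`, which has a
`K`-valuation independent basis `b`. The disjointness hypotheses make `b` `K'`-valuation
independent as well: in a combination `∑ cᵢ bᵢ` with `cᵢ ∈ K'`, the dominant terms have ratios
`bᵢ / bⱼ` whose values lie in `Γ(L) ∩ Γ(K') = Γ(K)`; rescaled by elements of `K`, they become units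
of `L` whose residues are linearly independent over `k(K)`, hence over `k(K')`, so the dominant
terms cannot cancel. Finally, every subspace of a space with a valuation independent basis has one:
exchange a basis vector for a vector of the subspace that it dominates, and induct.
-/

open Submodule Set

variable {v : Valuation F Γ₀}

theorem spanOver_eq_span (E : Subfield F) (s : Set F) : SpanOver (E : Set F) s = span E s := by
  ext y
  rw [SetLike.mem_coe, mem_span_set']
  constructor
  · rintro ⟨n, c, t, hc, ht, rfl⟩
    exact ⟨n, fun i => ⟨c i, hc i⟩, fun i => ⟨t i, ht i⟩, rfl⟩
  · rintro ⟨n, c, t, rfl⟩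
    exact ⟨n, fun i => c i, fun i => t i, fun i => (c i).2, fun i => (t i).2, rfl⟩

theorem spanOver_subset_spanOver {E E' : Set F} (h : E ⊆ E') (s : Set F) :
    SpanOver E s ⊆ SpanOver E' s := by
  rintro y ⟨n, c, t, hc, ht, rfl⟩
  exact ⟨n, c, t, fun i => h (hc i), ht, rfl⟩

theorem spanOver_subset {E L : Subfield F} (hEL : E ≤ L) {s : Set F} (hs : s ⊆ L) :
    SpanOver (E : Set F) s ⊆ L := by
  rintro y ⟨n, c, t, hc, ht, rfl⟩
  exact sum_mem fun i _ => L.mul_mem (hEL (hc i)) (hs (ht i))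

theorem mul_mem_span_range_mul {E : Subfield F} {ι : Type*} [Fintype ι] {b : ι → F} {y : F}
    (hy : y ∈ span E (range b)) (r : F) : y * r ∈ span E (range fun i => b i * r) := by
  obtain ⟨c, rfl⟩ := (mem_span_range_iff_exists_fun E).1 hy
  exact (mem_span_range_iff_exists_fun E).2 ⟨c, by simp only [Finset.sum_mul, smul_mul_assoc]⟩

theorem Submodule.span_singleton_sup_inf_eq_of_le_sup {K M : Type*} [Field K] [AddCommGroup M]
    [Module K M] {W V : Submodule K M} {u x : M} {c : K} (hu : u ∈ W) (hW : W ≤ K ∙ x ⊔ V)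
    (hc : c ≠ 0) (hux : u - c • x ∈ V) : K ∙ u ⊔ W ⊓ V = W := by
  refine le_antisymm (sup_le ((span_singleton_le_iff_mem _ _).2 hu) inf_le_left) fun w hw => ?_
  obtain ⟨_, hy, z, hz, rfl⟩ := mem_sup.1 (hW hw)
  obtain ⟨d, rfl⟩ := mem_span_singleton.1 hy
  have hrest : d • x + z - (d / c) • u = z - (d / c) • (u - c • x) := by
    rw [smul_sub, smul_smul, div_mul_cancel₀ d hc]
    abel
  refine mem_sup.2 ⟨(d / c) • u, mem_span_singleton.2 ⟨_, rfl⟩, _,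
    ⟨W.sub_mem hw (W.smul_mem _ hu), ?_⟩, add_sub_cancel _ _⟩
  rw [SetLike.mem_coe, hrest]
  exact V.sub_mem hz (V.smul_mem _ hux)

theorem exists_fin_family_mem_span {R M : Type*} [Semiring R] [AddCommMonoid M] [Module R M]
    {S : Set M} {ι : Type*} [Finite ι] {y : ι → M} (hy : ∀ i, y i ∈ span R S) :
    ∃ (N : ℕ) (t : Fin N → M), (∀ j, t j ∈ S) ∧ ∀ i, y i ∈ span R (range t) := by
  choose T hTS hT using fun i => mem_span_finite_of_mem_span (hy i)
  obtain ⟨N, t, ht⟩ := (finite_iUnion fun i => (T i).finite_toSet).fin_embedding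
  refine ⟨N, t, fun j => ?_, fun i => span_mono ?_ (hT i)⟩
  · obtain ⟨i, hi⟩ := mem_iUnion.1 (ht ▸ mem_range_self j)
    exact hTS i hi
  · rw [ht]
    exact subset_iUnion (fun i => (T i : Set M)) i

theorem valIndep_iff_le {E : Set F} {n : ℕ} {b : Fin n → F} :
    ValIndep v E b ↔
      ∀ c : Fin n → F, (∀ i, c i ∈ E) → ∀ i, v (c i * b i) ≤ v (∑ j, c j * b j) := by
  let _ : OrderBot Γ₀ := { bot := 0, bot_le := fun _ => zero_le }
  refine forall₂_congr fun c _ => ?_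
  have hle : ∀ i, v (c i * b i) ≤ Finset.univ.sup fun i => v (c i * b i) := fun i =>
    Finset.le_sup (f := fun i => v (c i * b i)) (Finset.mem_univ i)
  exact ⟨fun h i => h ▸ hle i, fun h => le_antisymm (v.map_sum_le fun i _ => hle i)
    (Finset.sup_le fun i _ => h i)⟩

theorem ValIndep.linIndepOver {E : Set F} {n : ℕ} {b : Fin n → F} (h : ValIndep v E b)
    (hb : ∀ i, b i ≠ 0) : LinIndepOver E b := fun c hc hsum i => by
  have := valIndep_iff_le.1 h c hc i
  rw [hsum, map_zero, le_zero_iff, Valuation.zero_iff, mul_eq_zero] at this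
  exact this.resolve_right (hb i)

theorem ValIndep.mul_left {E : Subfield F} {n : ℕ} {b : Fin n → F} (h : ValIndep v E b)
    {u : Fin n → F} (hu : ∀ i, u i ∈ E) : ValIndep v E fun i => u i * b i := by
  refine valIndep_iff_le.2 fun c hc i => ?_
  simp_rw [← mul_assoc]
  exact valIndep_iff_le.1 h (fun i => c i * u i) (fun i => E.mul_mem (hc i) (hu i)) i

theorem ValIndep.mul_right {E : Set F} {n : ℕ} {b : Fin n → F} (h : ValIndep v E b) (t : F) :
    ValIndep v E fun i => b i * t := by
  refine valIndep_iff_le.2 fun c hc i => ?_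
  simp only [← mul_assoc, ← Finset.sum_mul, map_mul v _ t]
  exact mul_le_mul_left (valIndep_iff_le.1 h c hc i) _

theorem ValIndep.comp_injective {E : Subfield F} {m n : ℕ} {b : Fin m → F}
    (h : ValIndep v E b) {σ : Fin n → Fin m} (hσ : σ.Injective) : ValIndep v E (b ∘ σ) := by
  classical
  refine valIndep_iff_le.2 fun c hc j => ?_
  have hext : ∀ i, Function.extend σ c 0 i ∈ E := fun i => by
    by_cases hi : ∃ j, σ j = i
    · obtain ⟨j, rfl⟩ := hi
      rw [hσ.extend_apply]
      exact hc j
    · rw [Function.extend_apply' _ _ _ hi]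
      exact E.zero_mem
  have hsum : ∑ j, c j * (b ∘ σ) j = ∑ i, Function.extend σ c 0 i * b i :=
    Fintype.sum_of_injective σ hσ _ _
      (fun i hi => by
        rw [Function.extend_apply' _ _ _ (by simpa using hi), Pi.zero_apply, zero_mul])
      fun j => by rw [hσ.extend_apply, Function.comp_apply]
  have := valIndep_iff_le.1 h _ hext (σ j)
  rwa [hσ.extend_apply, ← hsum] at this

section ValOrthogonal

variable {E : Subfield F}

/-- By the ultrametric inequality this is equivalent to `v (u + z) = max (v u) (v z)` for all
`z ∈ W`. -/
def ValOrthogonal (v : Valuation F Γ₀) (u : F) (W : Submodule E F) : Prop :=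
  ∀ z ∈ W, v u ≤ v (u + z)

theorem ValOrthogonal.mul_le {u : F} {W : Submodule E F} (h : ValOrthogonal v u W) {a : F}
    (ha : a ∈ E) {z : F} (hz : z ∈ W) : v (a * u) ≤ v (a * u + z) := by
  rcases eq_or_ne a 0 with rfl | ha0
  · simp
  · have hsplit : a * u + z = a * (u + a⁻¹ * z) := by field_simp
    rw [hsplit, map_mul, map_mul]
    exact mul_le_mul_right (h _ (W.smul_mem ⟨a⁻¹, E.inv_mem ha⟩ hz)) _

theorem ValOrthogonal.of_dominant {b₀ u C w₀ : F} {W : Submodule E F}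
    (h : ValOrthogonal v b₀ W) (hC : C ∈ E) (hw₀ : w₀ ∈ W) (hu : u = C * b₀ + w₀)
    (hle : v u ≤ v (C * b₀)) : ValOrthogonal v u W := fun z hz =>
  hle.trans <| by simpa only [hu, add_assoc] using h.mul_le hC (W.add_mem hw₀ hz)

theorem valIndep_insertNth_iff {m : ℕ} (p : Fin (m + 1)) (u : F) (β : Fin m → F) :
    ValIndep v E (p.insertNth u β) ↔
      ValIndep v E β ∧ ValOrthogonal v u (span E (range β)) := by
  simp only [valIndep_iff_le, Fin.sum_univ_succAbove _ p, Fin.insertNth_apply_same,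
    Fin.insertNth_apply_succAbove]
  constructor
  · intro h
    refine ⟨fun c hc j => ?_, fun z hz => ?_⟩
    · have hc' : ∀ i, Fin.insertNth (α := fun _ => F) p 0 c i ∈ E :=
        (Fin.forall_iff_succAbove p).2 ⟨by simp, by simpa using hc⟩
      simpa using h _ hc' (p.succAbove j)
    · obtain ⟨c, rfl⟩ := (mem_span_range_iff_exists_fun E).1 hz
      have hc' : ∀ i, Fin.insertNth (α := fun _ => F) p 1 (fun j => (c j : F)) i ∈ E :=
        (Fin.forall_iff_succAbove p).2 ⟨by simp, by simp⟩
      simpa [Subfield.smul_def] using h _ hc' p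
  · rintro ⟨hβ, hu⟩ c hc
    have hw : ∑ j, c (p.succAbove j) * β j ∈ span E (range β) :=
      sum_mem fun j _ => smul_mem _ (⟨_, hc _⟩ : E) (subset_span (mem_range_self j))
    have h₀ := hu.mul_le (hc p) hw
    refine (Fin.forall_iff_succAbove p).2 ⟨by simpa using h₀, fun j => ?_⟩
    rw [Fin.insertNth_apply_succAbove]
    calc v (c (p.succAbove j) * β j) ≤ v (∑ j, c (p.succAbove j) * β j) :=
          hβ _ (fun j => hc _) j
      _ = v (c p * u + ∑ j, c (p.succAbove j) * β j - c p * u) := by rw [add_sub_cancel_left]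
      _ ≤ v (c p * u + ∑ j, c (p.succAbove j) * β j) :=
          (v.map_sub _ _).trans (max_le le_rfl h₀)

theorem exists_dominant_term {m : ℕ} {b : Fin (m + 1) → F} {u : F}
    (hu : u ∈ span E (range b)) (hu0 : u ≠ 0) :
    ∃ i, ∃ C ∈ E, C ≠ 0 ∧ ∃ w₀ ∈ span E (range (i.removeNth b)),
      u = C * b i + w₀ ∧ v u ≤ v (C * b i) := by
  obtain ⟨c, rfl⟩ := (mem_span_range_iff_exists_fun E).1 hu
  obtain ⟨i, hi⟩ := Finite.exists_max fun i => v (c i * b i)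
  have hle : v (∑ j, c j • b j) ≤ v (c i * b i) := v.map_sum_le fun j _ => hi j
  refine ⟨i, c i, (c i).2, fun h => hu0 ?_, ∑ j, c (i.succAbove j) • i.removeNth b j,
    sum_mem fun j _ => smul_mem _ _ (subset_span (mem_range_self j)),
    Fin.sum_univ_succAbove _ i, hle⟩
  simpa [h] using hle

theorem exists_valIndep_span_eq {m : ℕ} {b : Fin m → F} (hb : ValIndep v E b)
    {W : Submodule E F} (hW : W ≤ span E (range b)) :
    ∃ (m' : ℕ) (b' : Fin m' → F), ValIndep v E b' ∧ (∀ j, b' j ≠ 0) ∧ span E (range b') = W := by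
  induction m generalizing W with
  | zero =>
    have hW0 : W = ⊥ := le_bot_iff.1 (hW.trans_eq (by simp))
    exact ⟨0, b, hb, finZeroElim, by simp [hW0]⟩
  | succ m ih =>
    by_cases hW0 : W = ⊥
    · exact ⟨0, Fin.elim0, valIndep_iff_le.2 fun _ _ i => i.elim0, finZeroElim, by simp [hW0]⟩
    obtain ⟨u, huW, hu0⟩ := exists_mem_ne_zero_of_ne_bot hW0
    obtain ⟨i, C, hC, hC0, w₀, hw₀, hu, hle⟩ := exists_dominant_term (v := v) (hW huW) hu0
    rw [← Fin.insertNth_self_removeNth i b, valIndep_insertNth_iff] at hb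
    rw [← Fin.insertNth_self_removeNth i b, Fin.range_insertNth] at hW
    change W ≤ span E (insert _ _) at hW
    rw [span_insert] at hW
    obtain ⟨m', β, hβ, hβ0, hβspan⟩ := ih hb.1 (inf_le_right (a := W))
    refine ⟨m' + 1, Fin.cons u β, ?_, Fin.cases hu0 hβ0, ?_⟩
    · rw [← Fin.insertNth_zero', valIndep_insertNth_iff]
      exact ⟨hβ, fun z hz => hb.2.of_dominant hC hw₀ hu hle z (by rw [hβspan] at hz; exact hz.2)⟩
    · rw [Fin.range_cons, span_insert, hβspan]
      exact span_singleton_sup_inf_eq_of_le_sup (c := ⟨C, hC⟩) huW hW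
        (fun h => hC0 (congrArg Subtype.val h)) (by simpa [hu, Subfield.smul_def] using hw₀)

end ValOrthogonal

theorem residue_eq_zero_iff_valuation_lt_one (x : v.valuationSubring) :
    IsLocalRing.residue _ x = 0 ↔ v x < 1 := by
  rw [IsLocalRing.residue_eq_zero_iff, Valuation.mem_maximalIdeal_iff]

theorem linIndepOver_residue_of_valIndep {E : Set F} {p : ℕ} {d : Fin p → v.valuationSubring}
    (hd1 : ∀ j, v (d j) = 1) (hd : ValIndep v E fun j => (d j : F)) :
    LinIndepOver (ResidueSet v E) fun j => IsLocalRing.residue _ (d j) := by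
  intro a ha hsum j
  choose α hαE hαa using ha
  have hres : IsLocalRing.residue _ (∑ j, α j * d j) = 0 := by simpa [map_sum, hαa] using hsum
  have hlt := (valIndep_iff_le.1 hd (fun j => α j) hαE j).trans_lt
    (by simpa using (residue_eq_zero_iff_valuation_lt_one _).1 hres)
  rw [map_mul, hd1, mul_one] at hlt
  rw [← hαa j, residue_eq_zero_iff_valuation_lt_one]
  exact hlt

theorem valuation_sum_eq_one_of_linIndepOver_residue {E : Set F} {p : ℕ}
    {d e : Fin p → v.valuationSubring}
    (hd : LinIndepOver (ResidueSet v E) fun j => IsLocalRing.residue _ (d j))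
    (he : ∀ j, (e j : F) ∈ E) {j₀ : Fin p} (he₀ : v (e j₀) = 1) :
    v (∑ j, (e j : F) * d j) = 1 := by
  refine le_antisymm (by simpa using (∑ j, e j * d j).2) (not_lt.1 fun hlt => ?_)
  have hres := (residue_eq_zero_iff_valuation_lt_one (∑ j, e j * d j)).2 (by simpa using hlt)
  rw [map_sum] at hres
  simp only [map_mul] at hres
  have := hd _ (fun j => ⟨e j, he j, rfl⟩) hres j₀
  exact ((residue_eq_zero_iff_valuation_lt_one _).1 this).ne he₀

section Transfer

variable {K K' L : Subfield F}

theorem valuation_sum_eq_of_forall_valuation_eq (hKK' : K ≤ K') (hKL : K ≤ L)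
    (hΓ : ValueGroupSet v L ∩ ValueGroupSet v K' ⊆ ValueGroupSet v K)
    (hres : ∀ (n : ℕ) (x : Fin n → ResField v), (∀ i, x i ∈ ResidueSet v L) →
      LinIndepOver (ResidueSet v K) x → LinIndepOver (ResidueSet v K') x)
    {p : ℕ} {b c : Fin p → F} (hbL : ∀ j, b j ∈ L) (hb : ValIndep v K b) (hc : ∀ j, c j ∈ K')
    {γ : Γ₀} (hγ0 : γ ≠ 0) (hγ : ∀ j, v (c j * b j) = γ) (j₀ : Fin p) :
    v (∑ j, c j * b j) = γ := by
  have hne : ∀ j, c j ≠ 0 ∧ b j ≠ 0 := fun j =>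
    mul_ne_zero_iff.1 fun h => hγ0 (by rw [← hγ j, h, map_zero])
  -- `v (b j / b j₀) = v (c j₀ / c j)` lies in `Γ(L) ∩ Γ(K')`
  have hk : ∀ j, ∃ k ∈ (K : Set F) \ {0}, v k = v (b j / b j₀) := fun j => hΓ
    ⟨⟨_, ⟨L.div_mem (hbL j) (hbL j₀), div_ne_zero (hne j).2 (hne j₀).2⟩, rfl⟩,
      ⟨c j₀ / c j, ⟨K'.div_mem (hc j₀) (hc j), div_ne_zero (hne j₀).1 (hne j).1⟩, by
        rw [map_div₀, map_div₀, div_eq_div_iff ((v.ne_zero_iff).2 (hne j).1)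
          ((v.ne_zero_iff).2 (hne j₀).2), ← map_mul, ← map_mul]
        simp only [hγ, mul_comm (b j)]⟩⟩
  choose k hk hkv using hk
  have hk0 : ∀ j, k j ≠ 0 := fun j => (hk j).2
  set d : Fin p → F := fun j => (k j)⁻¹ * b j * (b j₀)⁻¹
  set e : Fin p → F := fun j => c j * k j / c j₀
  have hd1 : ∀ j, v (d j) = 1 := fun j => by
    rw [show d j = _ from mul_assoc _ _ _, ← div_eq_mul_inv, map_mul, map_inv₀, hkv,
      inv_mul_cancel₀]
    exact (v.ne_zero_iff).2 (div_ne_zero (hne j).2 (hne j₀).2)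
  have hcb : ∀ j, c j * b j = c j₀ * b j₀ * (e j * d j) := fun j => by
    simp only [d, e]
    field_simp [(hne j₀).1, (hne j₀).2, hk0 j]
  have he1 : ∀ j, v (e j) = 1 := fun j => by
    have := (hγ j).symm
    rw [hcb, map_mul, hγ j₀, map_mul, hd1, mul_one] at this
    exact (mul_eq_left₀ hγ0).1 this.symm
  let dO : Fin p → v.valuationSubring := fun j => ⟨d j, (hd1 j).le⟩
  let eO : Fin p → v.valuationSubring := fun j => ⟨e j, (he1 j).le⟩
  have hdK : ValIndep v K fun j => (dO j : F) :=
    (hb.mul_left fun j => K.inv_mem (hk j).1).mul_right _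
  have hD : LinIndepOver (ResidueSet v K') fun j => IsLocalRing.residue _ (dO j) :=
    hres p _ (fun j => ⟨dO j, L.mul_mem (L.mul_mem (L.inv_mem (hKL (hk j).1)) (hbL j))
      (L.inv_mem (hbL j₀)), rfl⟩) (linIndepOver_residue_of_valIndep hd1 hdK)
  calc v (∑ j, c j * b j) = γ * v (∑ j, (eO j : F) * dO j) := by
        rw [Finset.sum_congr rfl fun j _ => hcb j, ← Finset.mul_sum, map_mul, hγ j₀]
    _ = γ := by
        rw [valuation_sum_eq_one_of_linIndepOver_residue hD
          (fun j => K'.div_mem (K'.mul_mem (hc j) (hKK' (hk j).1)) (hc j₀)) (he1 j₀), mul_one]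

theorem ValIndep.of_disjoint (hKK' : K ≤ K') (hKL : K ≤ L)
    (hΓ : ValueGroupSet v L ∩ ValueGroupSet v K' ⊆ ValueGroupSet v K)
    (hres : ∀ (n : ℕ) (x : Fin n → ResField v), (∀ i, x i ∈ ResidueSet v L) →
      LinIndepOver (ResidueSet v K) x → LinIndepOver (ResidueSet v K') x)
    {m : ℕ} {b : Fin m → F} (hbL : ∀ i, b i ∈ L) (hb : ValIndep v K b) : ValIndep v K' b := by
  classical
  refine valIndep_iff_le.2 fun c hc i => ?_
  have : Nonempty (Fin m) := ⟨i⟩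
  obtain ⟨i₀, hi₀⟩ := Finite.exists_max fun i => v (c i * b i)
  refine (hi₀ i).trans ?_
  set γ := v (c i₀ * b i₀)
  rcases eq_or_ne γ 0 with hγ0 | hγ0
  · rw [hγ0]
    exact zero_le
  set S := Finset.univ.filter fun i => v (c i * b i) = γ
  have hi₀S : i₀ ∈ S := Finset.mem_filter.2 ⟨Finset.mem_univ _, rfl⟩
  set σ := S.orderEmbOfFin rfl
  have hσS : ∀ j, σ j ∈ S := S.orderEmbOfFin_mem rfl
  have hS : v (∑ i ∈ S, c i * b i) = γ := by
    rw [← S.map_orderEmbOfFin_univ rfl, Finset.sum_map]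
    exact valuation_sum_eq_of_forall_valuation_eq hKK' hKL hΓ hres (fun j => hbL _)
      (hb.comp_injective σ.injective) (fun j => hc _) hγ0
      (fun j => (Finset.mem_filter.1 (hσS j)).2) ⟨0, Finset.card_pos.2 ⟨i₀, hi₀S⟩⟩
  have hSc : v (∑ i ∈ Finset.univ.filter fun i => ¬v (c i * b i) = γ, c i * b i) < γ :=
    v.map_sum_lt hγ0 fun i hi => (hi₀ i).lt_of_ne (Finset.mem_filter.1 hi).2
  rw [← Finset.sum_filter_add_sum_filter_not Finset.univ fun i => v (c i * b i) = γ,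
    v.map_add_eq_of_lt_left (hSc.trans_eq hS.symm), hS]

end Transfer

theorem Subring.exists_mul_mem_of_mem_closure {R : Subring F} {ι : Type*} [Fintype ι]
    {x : ι → F} (hx : ∀ i, x i ∈ Subfield.closure (R : Set F)) :
    ∃ s ∈ R, s ≠ 0 ∧ ∀ i, x i * s ∈ R := by
  classical
  have hden : ∀ i, ∃ q ∈ R, q ≠ 0 ∧ x i * q ∈ R := fun i => by
    obtain ⟨p, hp, q, hq, hpq⟩ := Subfield.mem_closure_iff.1 (hx i)
    rw [Subring.closure_eq] at hp hq
    rcases eq_or_ne q 0 with rfl | hq0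
    · exact ⟨1, R.one_mem, one_ne_zero, by simp [← hpq]⟩
    · exact ⟨q, hq, hq0, by rwa [← hpq, div_mul_cancel₀ _ hq0]⟩
  choose q hq hq0 hxq using hden
  refine ⟨∏ i, q i, prod_mem fun i _ => hq i, Finset.prod_ne_zero_iff.2 fun i _ => hq0 i,
    fun i => ?_⟩
  rw [← Finset.mul_prod_erase _ _ (Finset.mem_univ i), ← mul_assoc]
  exact R.mul_mem (hxq i) (prod_mem fun j _ => hq j)

theorem exists_mul_mem_span_of_mem_sup (K' L : Subfield F) {n : ℕ} {x : Fin n → F}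
    (hx : ∀ i, x i ∈ L ⊔ K') :
    ∃ s ≠ 0, ∃ (N : ℕ) (t : Fin N → F), (∀ j, t j ∈ L) ∧ ∀ i, x i * s ∈ span K' (range t) := by
  set A := Algebra.adjoin K' (L : Set F)
  have hA : Subalgebra.toSubmodule A = span K' L :=
    Algebra.adjoin_eq_span_of_subset _ fun y hy =>
      subset_span (Submonoid.closure_le (S := L.toSubmonoid).2 subset_rfl hy)
  have hLK' : L ⊔ K' ≤ Subfield.closure (A.toSubring : Set F) :=
    sup_le (fun y hy => Subfield.subset_closure (Algebra.subset_adjoin hy))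
      fun y hy => Subfield.subset_closure (A.algebraMap_mem ⟨y, hy⟩)
  obtain ⟨s, -, hs0, hxs⟩ := Subring.exists_mul_mem_of_mem_closure fun i => hLK' (hx i)
  obtain ⟨N, t, htL, hxt⟩ := exists_fin_family_mem_span (R := K')
    (y := fun i => x i * s) fun i => by rw [← hA]; exact hxs i
  exact ⟨s, hs0, N, t, htL, hxt⟩

/-- Under the hypotheses of valuative disjointness, the extension `LK'/K'` of
the compositum over `K'` is vs-defectless. -/
theorem compositum_vsDefectless
    (F Γ₀ : Type*) [Field F] [LinearOrderedCommGroupWithZero Γ₀]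
    (v : Valuation F Γ₀)
    (K K' L : Subfield F) (hKK' : K ≤ K') (hKL : K ≤ L)
    (hdef : VsDefectless v (K : Set F) (L : Set F))
    (hΓ : ValueGroupSet v (L : Set F) ∩ ValueGroupSet v (K' : Set F)
        = ValueGroupSet v (K : Set F))
    (hres : ∀ (n : ℕ) (x : Fin n → ResField v),
        (∀ i, x i ∈ ResidueSet v (L : Set F)) →
        LinIndepOver (ResidueSet v (K : Set F)) x →
        LinIndepOver (ResidueSet v (K' : Set F)) x) :
    VsDefectless v (K' : Set F) ((L ⊔ K' : Subfield F) : Set F) := by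
  intro n x hx
  obtain ⟨s, hs0, N, t, htL, hxt⟩ := exists_mul_mem_span_of_mem_sup K' L hx
  obtain ⟨m, b, hbK, -, hbt⟩ := hdef N t htL
  rw [spanOver_eq_span, spanOver_eq_span] at hbt
  have hbL : ∀ i, b i ∈ L := fun i => spanOver_subset hKL (range_subset_iff.2 htL)
    (by rw [spanOver_eq_span, ← hbt]; exact subset_span (mem_range_self i))
  have htb : ∀ j, t j ∈ span K' (range b) := fun j => by
    rw [← SetLike.mem_coe, ← spanOver_eq_span]
    refine spanOver_subset_spanOver hKK' _ ?_
    rw [spanOver_eq_span, hbt]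
    exact subset_span (mem_range_self j)
  have hxb : span K' (range x) ≤ span K' (range fun i => b i * s⁻¹) :=
    span_le.2 <| range_subset_iff.2 fun i => by
      simpa [hs0] using mul_mem_span_range_mul (span_le.2 (range_subset_iff.2 htb) (hxt i)) s⁻¹
  obtain ⟨m', b', hb', hb'0, hspan⟩ := exists_valIndep_span_eq
    ((hbK.of_disjoint hKK' hKL hΓ.le hres hbL).mul_right s⁻¹) hxb
  exact ⟨m', b', hb', hb'.linIndepOver hb'0, by rw [spanOver_eq_span, spanOver_eq_span, hspan]⟩
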